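/- Let k ≤ n ≤ r be positive integers, let λ > 0, m > 0, let C > 0 be a real number with r/C ≤ 1, and let μ ≥ 0. Let T_A = ∑_{i=1}^{n} T_i^{A} where T_i^{A} = t^{(i)} + ∑_{j=1}^{S_i} η_j^{(i)} with t^{(i)} ~ SExp(m/k, λ), S_i geometric with parameter (r−i+1)/C, and η's i.i.d. nonnegative integrable with mean μ independent of S_i; and let T_B = ∑_{i=1}^{k} T_i^{B} where T_i^{B} has the same form with S_i geometric with parameter (n−i+1)/C. Assuming all summands are integrable, E[T_A + T_B] = (n+k)/λ + (n/k + 1)·m + C·μ·(H_r + H_n − H_{r−n} − H_{n−k}). -/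

import Mathlib

open MeasureTheory ProbabilityTheory

/-- The shifted exponential distribution `SExp(Δ, λ)`:
    density `λ e^{-λ(x-Δ)}` for `x ≥ Δ` and `0` otherwise. -/
noncomputable def sexp (Δ lam : ℝ) : Measure ℝ :=
  volume.withDensity fun x =>
    ENNReal.ofReal (if Δ ≤ x then lam * Real.exp (-lam * (x - Δ)) else 0)

/-- Harmonic number `H_j = ∑_{i=1}^j 1/i`, as a real number. -/
noncomputable def H (j : ℕ) : ℝ := (harmonic j : ℝ)

/-!
By linearity of expectation it suffices to compute the mean of each summand. A shifted
exponential `SExp(Δ, λ)` has mean `Δ + 1/λ`. For a random sum, splitting on the value of the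
independent count `S` gives Wald's identity `E[∑_{j<S} η_j] = μ E[S]`, and a geometric count with
parameter `(R - i + 1)/C` has mean `C/(R - i + 1)`; summing over `i = 1, …, N` gives
`C μ (H_R - H_{R-N})`.
-/

open Filter Topology Set Real
open scoped ENNReal

lemma integral_sexp {Δ lam : ℝ} (hlam : 0 ≤ lam) (f : ℝ → ℝ) :
    ∫ x, f x ∂sexp Δ lam = ∫ x in Ioi Δ, lam * exp (-lam * (x - Δ)) * f x := by
  have hdens : Measurable fun x : ℝ =>
      ENNReal.ofReal (if Δ ≤ x then lam * exp (-lam * (x - Δ)) else 0) :=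
    (Measurable.ite measurableSet_Ici (by fun_prop) measurable_const).ennreal_ofReal
  rw [sexp, integral_withDensity_eq_integral_toReal_smul hdens
      (ae_of_all _ fun _ => ENNReal.ofReal_lt_top),
    ← integral_Ici_eq_integral_Ioi, ← integral_indicator measurableSet_Ici]
  congr 1 with x
  by_cases hx : Δ ≤ x <;> simp [hx, ENNReal.toReal_ofReal, hlam, (exp_pos _).le]

lemma integral_id_sexp {Δ lam : ℝ} (hΔ : 0 ≤ Δ) (hlam : 0 < lam) :
    ∫ x, x ∂sexp Δ lam = Δ + 1 / lam := by
  set F : ℝ → ℝ := fun x => -((x + 1 / lam) * exp (-lam * (x - Δ)))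
  have hderiv : ∀ x, HasDerivAt F (lam * exp (-lam * (x - Δ)) * x) x := by
    intro x
    refine (((hasDerivAt_id' x).add_const (1 / lam)).mul
      ((((hasDerivAt_id' x).sub_const Δ).const_mul (-lam)).exp)).neg.congr_deriv ?_
    field_simp
    ring
  have hlim : Tendsto F atTop (𝓝 0) := by
    have h := ((tendsto_rpow_mul_exp_neg_mul_atTop_nhds_zero 1 lam hlam).add
      ((tendsto_rpow_mul_exp_neg_mul_atTop_nhds_zero 0 lam hlam).const_mul (1 / lam))).const_mul
      (-exp (lam * Δ))
    rw [mul_zero, add_zero, mul_zero] at h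
    refine h.congr fun x => ?_
    rw [rpow_one, rpow_zero]
    simp only [F, show -lam * (x - Δ) = lam * Δ + -lam * x by ring, exp_add]
    ring
  rw [integral_sexp hlam.le, integral_Ioi_of_hasDerivAt_of_nonneg' (fun x _ => hderiv x)
    (fun x hx => by have : 0 ≤ x := hΔ.trans (le_of_lt hx); positivity) hlim]
  simp [F]

lemma hasSum_geometric_pmf_mul_natCast {p : ℝ} (hp0 : 0 < p) (hp1 : p ≤ 1) :
    HasSum (fun s : ℕ => ((1 - p) ^ (s - 1) * p) * s) (1 / p) := by
  have hq : ‖1 - p‖ < 1 := by rw [Real.norm_eq_abs, abs_of_nonneg (by linarith)]; linarith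
  rw [← hasSum_nat_add_iff' 1]
  simp only [Finset.range_one, Finset.sum_singleton, Nat.cast_zero, mul_zero, sub_zero,
    Nat.add_sub_cancel, Nat.cast_add, Nat.cast_one]
  have h := (hasSum_choose_mul_geometric_of_norm_lt_one 1 hq).mul_right p
  simp only [Nat.choose_one_right, sub_sub_cancel, Nat.cast_add, Nat.cast_one] at h
  rw [show 1 / p = 1 / p ^ (1 + 1) * p by field_simp]
  exact h.congr_fun fun t => by ring

lemma tsum_ofReal_geometric_pmf_mul_natCast {p : ℝ} (hp0 : 0 < p) (hp1 : p ≤ 1) :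
    ∑' s : ℕ, ENNReal.ofReal ((1 - p) ^ (s - 1) * p) * s = ENNReal.ofReal (1 / p) := by
  have hsum := hasSum_geometric_pmf_mul_natCast hp0 hp1
  have hnn : ∀ s : ℕ, 0 ≤ (1 - p) ^ (s - 1) * p := fun s =>
    mul_nonneg (pow_nonneg (by linarith) _) hp0.le
  rw [← hsum.tsum_eq, ENNReal.ofReal_tsum_of_nonneg (fun s => mul_nonneg (hnn s) s.cast_nonneg)
    hsum.summable]
  congr 1 with s
  rw [ENNReal.ofReal_mul (hnn s), ENNReal.ofReal_natCast]

lemma sum_Icc_one_div_sub_add_one {N R : ℕ} (h : N ≤ R) :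
    ∑ i ∈ Finset.Icc 1 N, 1 / ((R : ℝ) - i + 1) = H R - H (R - N) := by
  induction N with
  | zero => simp
  | succ N ih =>
    rw [Finset.sum_Icc_succ_top (Nat.le_add_left 1 N), ih (Nat.le_of_succ_le h),
      show R - N = (R - (N + 1)) + 1 by omega, H, H, H, harmonic_succ]
    push_cast [Nat.cast_sub h]
    ring

section RandomSums

variable {Ω : Type*} [MeasurableSpace Ω] {P : Measure Ω}

lemma lintegral_sum_range_eq_tsum {S : Ω → ℕ} {f : ℕ → Ω → ℝ≥0∞} (hS : Measurable S)
    (hf : ∀ j, AEMeasurable (f j) P) (hindep : IndepFun S (fun ω j => f j ω) P) :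
    ∫⁻ ω, ∑ j ∈ Finset.range (S ω), f j ω ∂P
      = ∑' s : ℕ, P {ω | S ω = s} * ∑ j ∈ Finset.range s, ∫⁻ ω, f j ω ∂P := by
  have hF : AEMeasurable (fun ω j => f j ω) P := aemeasurable_pi_lambda _ hf
  have hind : ∀ s : ℕ, Measurable (({s} : Set ℕ).indicator (1 : ℕ → ℝ≥0∞)) :=
    fun _ => measurable_of_countable _
  have hsplit : ∀ ω, ∑ j ∈ Finset.range (S ω), f j ω
      = ∑' s : ℕ, ({s} : Set ℕ).indicator 1 (S ω) * ∑ j ∈ Finset.range s, f j ω := fun ω => by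
    rw [tsum_eq_single (S ω) fun s hs => by simp [Ne.symm hs]]
    simp
  have hterm : ∀ s : ℕ, ∫⁻ ω, ({s} : Set ℕ).indicator 1 (S ω) * ∑ j ∈ Finset.range s, f j ω ∂P
      = P {ω | S ω = s} * ∑ j ∈ Finset.range s, ∫⁻ ω, f j ω ∂P := fun s => by
    have hg : Measurable fun v : ℕ → ℝ≥0∞ => ∑ j ∈ Finset.range s, v j := by fun_prop
    have hprod := lintegral_mul_eq_lintegral_mul_lintegral_of_indepFun''
      ((hind s).comp hS).aemeasurable (hg.comp_aemeasurable hF) (hindep.comp (hind s) hg)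
    simp only [Function.comp_apply] at hprod
    have hP : ∫⁻ ω, ({s} : Set ℕ).indicator 1 (S ω) ∂P = P {ω | S ω = s} :=
      lintegral_indicator_one (hS (measurableSet_singleton s))
    rw [hprod, lintegral_finsetSum' _ fun j _ => hf j, hP]
  simp_rw [hsplit]
  rw [lintegral_tsum fun s => ?_]
  · exact tsum_congr hterm
  · exact ((hind s).comp hS).aemeasurable.mul (Finset.aemeasurable_fun_sum _ fun j _ => hf j)

lemma integral_sum_range_of_geometric {S : Ω → ℕ} {η : ℕ → Ω → ℝ} {μ p : ℝ}
    (hp0 : 0 < p) (hp1 : p ≤ 1) (hS : Measurable S)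
    (hSd : ∀ s : ℕ, 1 ≤ s → P {ω | S ω = s} = ENNReal.ofReal ((1 - p) ^ (s - 1) * p))
    (hηnn : ∀ j ω, 0 ≤ η j ω) (hηint : ∀ j, Integrable (η j) P)
    (hηmean : ∀ j, ∫ ω, η j ω ∂P = μ) (hindep : IndepFun S (fun ω j => η j ω) P)
    (hint : Integrable (fun ω => ∑ j ∈ Finset.range (S ω), η j ω) P) :
    ∫ ω, ∑ j ∈ Finset.range (S ω), η j ω ∂P = μ / p := by
  have hμ : 0 ≤ μ := hηmean 0 ▸ integral_nonneg (hηnn 0)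
  have hmean : ∀ j, ∫⁻ ω, ENNReal.ofReal (η j ω) ∂P = ENNReal.ofReal μ := fun j => by
    rw [← hηmean j, ofReal_integral_eq_lintegral_ofReal (hηint j) (ae_of_all _ (hηnn j))]
  have hindep' : IndepFun S (fun ω j => ENNReal.ofReal (η j ω)) P :=
    hindep.comp measurable_id (ψ := fun (v : ℕ → ℝ) j => ENNReal.ofReal (v j)) (by fun_prop)
  have hterm : ∀ s : ℕ, P {ω | S ω = s} * ∑ j ∈ Finset.range s, ENNReal.ofReal μ
      = ENNReal.ofReal ((1 - p) ^ (s - 1) * p) * s * ENNReal.ofReal μ := by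
    rintro (_ | s)
    · simp
    · rw [hSd _ (Nat.le_add_left 1 s), Finset.sum_const, Finset.card_range, nsmul_eq_mul,
        mul_assoc]
  have hlin : ∫⁻ ω, ENNReal.ofReal (∑ j ∈ Finset.range (S ω), η j ω) ∂P
      = ENNReal.ofReal (μ / p) := calc
    _ = ∫⁻ ω, ∑ j ∈ Finset.range (S ω), ENNReal.ofReal (η j ω) ∂P := by
      simp_rw [ENNReal.ofReal_sum_of_nonneg fun j _ => hηnn j _]
    _ = ∑' s : ℕ, P {ω | S ω = s} * ∑ j ∈ Finset.range s, ENNReal.ofReal μ := by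
      simp_rw [lintegral_sum_range_eq_tsum hS (fun j => (hηint j).aemeasurable.ennreal_ofReal)
        hindep', hmean]
    _ = ENNReal.ofReal (1 / p) * ENNReal.ofReal μ := by
      rw [tsum_congr hterm, ENNReal.tsum_mul_right, tsum_ofReal_geometric_pmf_mul_natCast hp0 hp1]
    _ = ENNReal.ofReal (μ / p) := by
      rw [← ENNReal.ofReal_mul (by positivity), one_div_mul_eq_div]
  rw [integral_eq_lintegral_of_nonneg_ae
    (ae_of_all _ fun ω => Finset.sum_nonneg fun j _ => hηnn j ω) hint.aestronglyMeasurable, hlin,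
    ENNReal.toReal_ofReal (by positivity)]

lemma integral_sum_Icc_sexp_add_sum_range {N R : ℕ} (hNR : N ≤ R) {Δ lam C μ : ℝ}
    (hΔ : 0 ≤ Δ) (hlam : 0 < lam) (hC : 0 < C) (hRC : (R : ℝ) ≤ C)
    {t : ℕ → Ω → ℝ} {S : ℕ → Ω → ℕ} {η : ℕ → ℕ → Ω → ℝ}
    (htd : ∀ i, 1 ≤ i → i ≤ N → Measure.map (t i) P = sexp Δ lam)
    (htint : ∀ i, Integrable (t i) P) (hS : ∀ i, Measurable (S i))
    (hSd : ∀ i, 1 ≤ i → i ≤ N → ∀ s : ℕ, 1 ≤ s →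
      P {ω | S i ω = s} =
        ENNReal.ofReal ((1 - ((R : ℝ) - (i : ℝ) + 1) / C) ^ (s - 1)
          * (((R : ℝ) - (i : ℝ) + 1) / C)))
    (hηnn : ∀ i j ω, 0 ≤ η i j ω) (hηint : ∀ i j, Integrable (η i j) P)
    (hηmean : ∀ i j, ∫ ω, η i j ω ∂P = μ)
    (hindep : ∀ i, IndepFun (S i) (fun ω (j : ℕ) => η i j ω) P)
    (hsumint : ∀ i, Integrable (fun ω => ∑ j ∈ Finset.range (S i ω), η i j ω) P) :
    ∫ ω, ∑ i ∈ Finset.Icc 1 N, (t i ω + ∑ j ∈ Finset.range (S i ω), η i j ω) ∂P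
      = N * (Δ + 1 / lam) + C * μ * (H R - H (R - N)) := by
  have hsummand : ∀ i ∈ Finset.Icc 1 N,
      ∫ ω, (t i ω + ∑ j ∈ Finset.range (S i ω), η i j ω) ∂P
        = (Δ + 1 / lam) + C * μ * (1 / ((R : ℝ) - i + 1)) := by
    intro i hi
    obtain ⟨h1, h2⟩ := Finset.mem_Icc.mp hi
    have hiR : (i : ℝ) ≤ R := by exact_mod_cast h2.trans hNR
    have hi1 : (1 : ℝ) ≤ i := by exact_mod_cast h1
    have ht : ∫ ω, t i ω ∂P = Δ + 1 / lam := by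
      rw [← integral_id_sexp hΔ hlam, ← htd i h1 h2]
      exact (integral_map (htint i).aemeasurable aestronglyMeasurable_id).symm
    have hW := integral_sum_range_of_geometric (div_pos (by linarith) hC)
      ((div_le_one hC).mpr (by linarith)) (hS i) (hSd i h1 h2) (hηnn i) (hηint i) (hηmean i)
      (hindep i) (hsumint i)
    rw [integral_add (htint i) (hsumint i), ht, hW]
    field_simp
  have hint : ∀ i, Integrable (fun ω => t i ω + ∑ j ∈ Finset.range (S i ω), η i j ω) P :=
    fun i => (htint i).add (hsumint i)
  rw [integral_finsetSum _ fun i _ => hint i, Finset.sum_congr rfl hsummand,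
    Finset.sum_add_distrib, Finset.sum_const, Nat.card_Icc, ← Finset.mul_sum,
    sum_Icc_one_div_sub_add_one hNR, nsmul_eq_mul, Nat.add_sub_cancel]

end RandomSums

theorem stmt5_general {Ω : Type*} [MeasurableSpace Ω] (P : Measure Ω) [IsProbabilityMeasure P]
    (k n r : ℕ) (hk : 0 < k) (hkn : k ≤ n) (hnr : n ≤ r)
    (lam m : ℝ) (hlam : 0 < lam) (hm : 0 < m)
    (C : ℝ) (hC : 0 < C) (hrC : (r : ℝ) / C ≤ 1)
    (μ : ℝ)
    -- dissemination phase: `T_A = ∑_{i=1}^n T_i^A`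
    (tA : ℕ → Ω → ℝ) (SA : ℕ → Ω → ℕ) (ηA : ℕ → ℕ → Ω → ℝ)
    (htAd : ∀ i, 1 ≤ i → i ≤ n → Measure.map (tA i) P = sexp (m / k) lam)
    (htAint : ∀ i, Integrable (tA i) P)
    (hSAmeas : ∀ i, Measurable (SA i))
    (hSAd : ∀ i, 1 ≤ i → i ≤ n → ∀ s : ℕ, 1 ≤ s →
      P {ω | SA i ω = s} =
        ENNReal.ofReal ((1 - ((r : ℝ) - (i : ℝ) + 1) / C) ^ (s - 1)
          * (((r : ℝ) - (i : ℝ) + 1) / C)))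
    (hηAnn : ∀ i j ω, 0 ≤ ηA i j ω)
    (hηAint : ∀ i j, Integrable (ηA i j) P)
    (hηAmean : ∀ i j, ∫ ω, ηA i j ω ∂P = μ)
    (hAindep : ∀ i, IndepFun (SA i) (fun ω (j : ℕ) => ηA i j ω) P)
    (hAsumint : ∀ i, Integrable (fun ω => ∑ j ∈ Finset.range (SA i ω), ηA i j ω) P)
    -- collection phase: `T_B = ∑_{i=1}^k T_i^B`
    (tB : ℕ → Ω → ℝ) (SB : ℕ → Ω → ℕ) (ηB : ℕ → ℕ → Ω → ℝ)
    (htBd : ∀ i, 1 ≤ i → i ≤ k → Measure.map (tB i) P = sexp (m / k) lam)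
    (htBint : ∀ i, Integrable (tB i) P)
    (hSBmeas : ∀ i, Measurable (SB i))
    (hSBd : ∀ i, 1 ≤ i → i ≤ k → ∀ s : ℕ, 1 ≤ s →
      P {ω | SB i ω = s} =
        ENNReal.ofReal ((1 - ((n : ℝ) - (i : ℝ) + 1) / C) ^ (s - 1)
          * (((n : ℝ) - (i : ℝ) + 1) / C)))
    (hηBnn : ∀ i j ω, 0 ≤ ηB i j ω)
    (hηBint : ∀ i j, Integrable (ηB i j) P)
    (hηBmean : ∀ i j, ∫ ω, ηB i j ω ∂P = μ)
    (hBindep : ∀ i, IndepFun (SB i) (fun ω (j : ℕ) => ηB i j ω) P)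
    (hBsumint : ∀ i, Integrable (fun ω => ∑ j ∈ Finset.range (SB i ω), ηB i j ω) P) :
    ∫ ω, ((∑ i ∈ Finset.Icc 1 n, (tA i ω + ∑ j ∈ Finset.range (SA i ω), ηA i j ω))
          + (∑ i ∈ Finset.Icc 1 k, (tB i ω + ∑ j ∈ Finset.range (SB i ω), ηB i j ω))) ∂P
      = ((n : ℝ) + (k : ℝ)) / lam + ((n : ℝ) / (k : ℝ) + 1) * m
          + C * μ * (H r + H n - H (r - n) - H (n - k)) := by
  have hrC' : (r : ℝ) ≤ C := (div_le_one hC).mp hrC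
  have hΔ : 0 ≤ m / k := by positivity
  have hA := integral_sum_Icc_sexp_add_sum_range hnr hΔ hlam hC hrC' htAd htAint hSAmeas hSAd
    hηAnn hηAint hηAmean hAindep hAsumint
  have hB := integral_sum_Icc_sexp_add_sum_range hkn hΔ hlam hC
    ((Nat.cast_le.mpr hnr).trans hrC') htBd htBint hSBmeas hSBd hηBnn hηBint hηBmean hBindep
    hBsumint
  rw [integral_add (by fun_prop) (by fun_prop), hA, hB]
  field_simp
  ring

theorem stmt5 {Ω : Type*} [MeasurableSpace Ω] (P : Measure Ω) [IsProbabilityMeasure P]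
    (k n r : ℕ) (hk : 0 < k) (hkn : k ≤ n) (hnr : n ≤ r)
    (lam m : ℝ) (hlam : 0 < lam) (hm : 0 < m)
    (C : ℝ) (hC : 0 < C) (hrC : (r : ℝ) / C ≤ 1)
    (μ : ℝ) (hμ : 0 ≤ μ)
    -- dissemination phase: `T_A = ∑_{i=1}^n T_i^A`
    (tA : ℕ → Ω → ℝ) (SA : ℕ → Ω → ℕ) (ηA : ℕ → ℕ → Ω → ℝ)
    (htAmeas : ∀ i, Measurable (tA i))
    (htAd : ∀ i, 1 ≤ i → i ≤ n → Measure.map (tA i) P = sexp (m / k) lam)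
    (htAint : ∀ i, Integrable (tA i) P)
    (hSAmeas : ∀ i, Measurable (SA i))
    (hSAd : ∀ i, 1 ≤ i → i ≤ n → ∀ s : ℕ, 1 ≤ s →
      P {ω | SA i ω = s} =
        ENNReal.ofReal ((1 - ((r : ℝ) - (i : ℝ) + 1) / C) ^ (s - 1)
          * (((r : ℝ) - (i : ℝ) + 1) / C)))
    (hηAmeas : ∀ i j, Measurable (ηA i j))
    (hηAnn : ∀ i j ω, 0 ≤ ηA i j ω)
    (hηAint : ∀ i j, Integrable (ηA i j) P)
    (hηAmean : ∀ i j, ∫ ω, ηA i j ω ∂P = μ)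
    (hηAiid : ∀ i, iIndepFun (ηA i) P)
    (hηAid : ∀ i j, Measure.map (ηA i j) P = Measure.map (ηA i 0) P)
    (hAindep : ∀ i, IndepFun (SA i) (fun ω (j : ℕ) => ηA i j ω) P)
    (hAsumint : ∀ i, Integrable (fun ω => ∑ j ∈ Finset.range (SA i ω), ηA i j ω) P)
    -- collection phase: `T_B = ∑_{i=1}^k T_i^B`
    (tB : ℕ → Ω → ℝ) (SB : ℕ → Ω → ℕ) (ηB : ℕ → ℕ → Ω → ℝ)
    (htBmeas : ∀ i, Measurable (tB i))
    (htBd : ∀ i, 1 ≤ i → i ≤ k → Measure.map (tB i) P = sexp (m / k) lam)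
    (htBint : ∀ i, Integrable (tB i) P)
    (hSBmeas : ∀ i, Measurable (SB i))
    (hSBd : ∀ i, 1 ≤ i → i ≤ k → ∀ s : ℕ, 1 ≤ s →
      P {ω | SB i ω = s} =
        ENNReal.ofReal ((1 - ((n : ℝ) - (i : ℝ) + 1) / C) ^ (s - 1)
          * (((n : ℝ) - (i : ℝ) + 1) / C)))
    (hηBmeas : ∀ i j, Measurable (ηB i j))
    (hηBnn : ∀ i j ω, 0 ≤ ηB i j ω)
    (hηBint : ∀ i j, Integrable (ηB i j) P)
    (hηBmean : ∀ i j, ∫ ω, ηB i j ω ∂P = μ)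
    (hηBiid : ∀ i, iIndepFun (ηB i) P)
    (hηBid : ∀ i j, Measure.map (ηB i j) P = Measure.map (ηB i 0) P)
    (hBindep : ∀ i, IndepFun (SB i) (fun ω (j : ℕ) => ηB i j ω) P)
    (hBsumint : ∀ i, Integrable (fun ω => ∑ j ∈ Finset.range (SB i ω), ηB i j ω) P) :
    ∫ ω, ((∑ i ∈ Finset.Icc 1 n, (tA i ω + ∑ j ∈ Finset.range (SA i ω), ηA i j ω))
          + (∑ i ∈ Finset.Icc 1 k, (tB i ω + ∑ j ∈ Finset.range (SB i ω), ηB i j ω))) ∂P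
      = ((n : ℝ) + (k : ℝ)) / lam + ((n : ℝ) / (k : ℝ) + 1) * m
          + C * μ * (H r + H n - H (r - n) - H (n - k)) :=
  stmt5_general P k n r hk hkn hnr lam m hlam hm C hC hrC μ tA SA ηA htAd htAint hSAmeas hSAd hηAnn
    hηAint hηAmean hAindep hAsumint tB SB ηB htBd htBint hSBmeas hSBd hηBnn hηBint hηBmean hBindep
    hBsumint
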